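/- For every k ≥ 2 and every surjective colouring Δ : ℕ^(2) ↠ [k], one has 2 ∈ F_Δ: there exists an infinite subset X ⊆ ℕ that is exactly 2-coloured. -/

import Mathlib

/-- The colour of the unordered edge `{x, y}` (only values on distinct pairs matter). -/
def edgeCol (Δ : ℕ → ℕ → ℕ) (x y : ℕ) : ℕ := Δ (min x y) (max x y)

/-- `colourSet Δ X` is the set of colours attained by `Δ` on edges with both endpoints in `X`. -/
def colourSet (Δ : ℕ → ℕ → ℕ) (X : Set ℕ) : Set ℕ :=
  {c | ∃ x ∈ X, ∃ y ∈ X, x ≠ y ∧ edgeCol Δ x y = c}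

/-- `Δ` is a surjective colouring `ℕ^(2) ↠ [k]` of the edges of the complete
graph on `ℕ` with colour set `[k] = {1, …, k}`. -/
def IsColouring (Δ : ℕ → ℕ → ℕ) (k : ℕ) : Prop :=
  (∀ x y : ℕ, x ≠ y → edgeCol Δ x y ∈ Finset.Icc 1 k) ∧
  (∀ c ∈ Finset.Icc 1 k, ∃ x y : ℕ, x ≠ y ∧ edgeCol Δ x y = c)

/-- `F_Δ`: the set of `m ∈ [k]` for which some infinite `X ⊆ ℕ` is exactly `m`-coloured. -/
def FSet (Δ : ℕ → ℕ → ℕ) (k : ℕ) : Set ℕ :=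
  {m | m ∈ Finset.Icc 1 k ∧ ∃ X : Set ℕ, X.Infinite ∧ (colourSet Δ X).ncard = m}

/-!
By the infinite Ramsey theorem some infinite set `M` is monochromatic, of colour `c` say.
As `k ≥ 2`, some edge `uv` has a colour `d ≠ c`. Thinning `M` by pigeonhole, `u` sends a
single colour `e` and `v` a single colour `f` into `M`. If `e ≠ c` then `M ∪ {u}` is coloured
by exactly `{e, c}`, if `f ≠ c` then `M ∪ {v}` is coloured by exactly `{f, c}`, and if
`e = f = c` then `M ∪ {u, v}` is coloured by exactly `{d, c}`.
-/

open Set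

theorem Set.Infinite.exists_infinite_fiber {α β : Type*} {S : Set α} (hS : S.Infinite)
    {C : Set β} (hC : C.Finite) {g : α → β} (hg : MapsTo g S C) :
    ∃ c ∈ C, (S ∩ g ⁻¹' {c}).Infinite := by
  by_contra! h
  refine hS ((hC.biUnion h).subset fun x hx => ?_)
  exact mem_biUnion (hg hx) ⟨hx, rfl⟩

section Ramsey

variable {α : Type*} {f : ℕ → ℕ → α} {C : Set α}

theorem exists_strictMono_colour_eq_of_lt (hC : C.Finite) (hf : ∀ x y, x < y → f x y ∈ C) :
    ∃ a : ℕ → ℕ, StrictMono a ∧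
      ∃ c : ℕ → α, (∀ n, c n ∈ C) ∧ ∀ i j, i < j → f (a i) (a j) = c i := by
  have step : ∀ S : {S : Set ℕ // S.Infinite}, ∃ T : {S : Set ℕ // S.Infinite}, ∃ c ∈ C,
      T.1 ⊆ S.1 ∧ ∀ x ∈ T.1, sInf S.1 < x ∧ f (sInf S.1) x = c := by
    rintro ⟨S, hS⟩
    obtain ⟨c, hc, hT⟩ := (hS.sdiff (finite_Iic (sInf S))).exists_infinite_fiber hC
      (g := f (sInf S)) fun x hx => hf _ _ (not_le.1 hx.2)
    exact ⟨⟨_, hT⟩, c, hc, fun x hx => hx.1.1, fun x hx => ⟨not_le.1 hx.1.2, hx.2⟩⟩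
  choose next c hc hsub hnext using step
  set S : ℕ → {S : Set ℕ // S.Infinite} := fun n => next^[n] ⟨univ, infinite_univ⟩
  have hS_succ (n : ℕ) : S (n + 1) = next (S n) := Function.iterate_succ_apply' _ _ _
  have hanti : Antitone fun n => (S n).1 :=
    antitone_nat_of_succ_le fun n => hS_succ n ▸ hsub (S n)
  have hlater {i j : ℕ} (h : i < j) : sInf (S i).1 < sInf (S j).1 ∧
      f (sInf (S i).1) (sInf (S j).1) = c (S i) :=
    hnext (S i) _ (hS_succ i ▸ hanti h (Nat.sInf_mem (S j).2.nonempty))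
  exact ⟨fun n => sInf (S n).1, fun i j h => (hlater h).1, fun n => c (S n),
    fun n => hc (S n), fun i j h => (hlater h).2⟩

theorem exists_infinite_monochromatic (hC : C.Finite) (hf : ∀ x y, x < y → f x y ∈ C) :
    ∃ c ∈ C, ∃ M : Set ℕ, M.Infinite ∧ ∀ x ∈ M, ∀ y ∈ M, x < y → f x y = c := by
  obtain ⟨a, ha, c, hc, hac⟩ := exists_strictMono_colour_eq_of_lt hC hf
  obtain ⟨c₀, hc₀, hI⟩ := infinite_univ.exists_infinite_fiber hC fun n _ => hc n
  refine ⟨c₀, hc₀, a '' (univ ∩ c ⁻¹' {c₀}), hI.image ha.injective.injOn, ?_⟩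
  rintro _ ⟨i, hi, rfl⟩ _ ⟨j, -, rfl⟩ hij
  rw [hac i j (ha.lt_iff_lt.1 hij)]
  exact hi.2

end Ramsey

theorem edgeCol_comm (Δ : ℕ → ℕ → ℕ) (x y : ℕ) : edgeCol Δ x y = edgeCol Δ y x := by
  rw [edgeCol, edgeCol, min_comm, max_comm]

section ColourSet

variable {Δ : ℕ → ℕ → ℕ}

theorem colourSet_mono {S T : Set ℕ} (h : S ⊆ T) : colourSet Δ S ⊆ colourSet Δ T := by
  rintro _ ⟨x, hx, y, hy, hxy, rfl⟩
  exact ⟨x, h hx, y, h hy, hxy, rfl⟩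

theorem colourSet_nonempty {S : Set ℕ} (hS : S.Nontrivial) : (colourSet Δ S).Nonempty := by
  obtain ⟨x, hx, y, hy, hxy⟩ := hS
  exact ⟨_, x, hx, y, hy, hxy, rfl⟩

theorem colourSet_insert {z : ℕ} {S : Set ℕ} (hz : z ∉ S) :
    colourSet Δ (insert z S) = edgeCol Δ z '' S ∪ colourSet Δ S := by
  ext c
  constructor
  · rintro ⟨x, hx | hx, y, hy | hy, hxy, rfl⟩
    · exact absurd (hx.trans hy.symm) hxy
    · exact Or.inl ⟨y, hy, hx ▸ rfl⟩
    · exact Or.inl ⟨x, hx, hy ▸ edgeCol_comm Δ _ _⟩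
    · exact Or.inr ⟨x, hx, y, hy, hxy, rfl⟩
  · rintro (⟨y, hy, rfl⟩ | hc)
    · exact ⟨z, mem_insert z S, y, mem_insert_of_mem z hy, (ne_of_mem_of_not_mem hy hz).symm,
        rfl⟩
    · exact colourSet_mono (subset_insert z S) hc

theorem colourSet_eq_singleton {M : Set ℕ} (hM : M.Nontrivial) {c : ℕ}
    (h : ∀ x ∈ M, ∀ y ∈ M, x < y → edgeCol Δ x y = c) : colourSet Δ M = {c} := by
  refine (colourSet_nonempty hM).subset_singleton_iff.1 ?_
  rintro _ ⟨x, hx, y, hy, hxy, rfl⟩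
  rcases hxy.lt_or_gt with hlt | hlt
  · exact h x hx y hy hlt
  · exact edgeCol_comm Δ x y ▸ h y hy x hx hlt

theorem exists_infinite_colourSet_eq_pair {C : Set ℕ} (hC : C.Finite)
    (hcol : ∀ x y, x ≠ y → edgeCol Δ x y ∈ C) {M : Set ℕ} (hM : M.Infinite) {c : ℕ}
    (hMc : colourSet Δ M = {c}) {u v : ℕ} (huv : u ≠ v) (hd : edgeCol Δ u v ≠ c) :
    ∃ X : Set ℕ, X.Infinite ∧ ∃ d ≠ c, colourSet Δ X = {d, c} := by
  obtain ⟨⟨e, f⟩, -, hN⟩ := (hM.sdiff (toFinite {u, v})).exists_infinite_fiber (hC.prod hC)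
    (g := fun x => (edgeCol Δ u x, edgeCol Δ v x)) fun x hx =>
      ⟨hcol u x (ne_of_mem_of_not_mem (mem_insert u {v}) hx.2),
        hcol v x (ne_of_mem_of_not_mem (mem_insert_of_mem u (mem_singleton v)) hx.2)⟩
  set N := M \ {u, v} ∩ (fun x => (edgeCol Δ u x, edgeCol Δ v x)) ⁻¹' {(e, f)}
  have hNc : colourSet Δ N = {c} :=
    (colourSet_nonempty hN.nontrivial).subset_singleton_iff.1
      (hMc ▸ colourSet_mono fun x hx => hx.1.1)
  have hu : edgeCol Δ u '' N = {e} := (hN.nonempty.image _).subset_singleton_iff.1 <|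
    image_subset_iff.2 fun x hx => congrArg Prod.fst hx.2
  have hv : edgeCol Δ v '' N = {f} := (hN.nonempty.image _).subset_singleton_iff.1 <|
    image_subset_iff.2 fun x hx => congrArg Prod.snd hx.2
  have huN : u ∉ N := fun h => h.1.2 (.inl rfl)
  have hvN : v ∉ N := fun h => h.1.2 (.inr rfl)
  by_cases he : e = c
  · by_cases hf : f = c
    · refine ⟨insert u (insert v N), (hN.mono (subset_insert v N)).mono (subset_insert _ _),
        _, hd, ?_⟩
      rw [colourSet_insert (by simp [huv, huN]), colourSet_insert hvN, image_insert_eq, hu, hv,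
        hNc, he, hf]
      simp
    · exact ⟨insert v N, hN.mono (subset_insert v N), f, hf, by
        rw [colourSet_insert hvN, hv, hNc, singleton_union]⟩
  · exact ⟨insert u N, hN.mono (subset_insert u N), e, he, by
      rw [colourSet_insert huN, hu, hNc, singleton_union]⟩

end ColourSet

/-- For every `k ≥ 2` and every surjective colouring `Δ : ℕ^(2) ↠ [k]`, we have `2 ∈ F_Δ`:
some infinite `X ⊆ ℕ` is exactly 2-coloured. -/
theorem two_mem_FSet (k : ℕ) (hk : 2 ≤ k) (Δ : ℕ → ℕ → ℕ) (hΔ : IsColouring Δ k) :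
    2 ∈ FSet Δ k := by
  have hcol (x y : ℕ) (h : x ≠ y) : edgeCol Δ x y ∈ (Finset.Icc 1 k : Set ℕ) := hΔ.1 x y h
  obtain ⟨c, -, M, hM, hMc⟩ :=
    exists_infinite_monochromatic (Finset.Icc 1 k).finite_toSet fun x y h => hcol x y h.ne
  obtain ⟨d, hd, hdc⟩ := (Finset.Icc 1 k).exists_mem_ne (by rw [Nat.card_Icc]; omega) c
  obtain ⟨u, v, huv, rfl⟩ := hΔ.2 d hd
  obtain ⟨X, hX, e, he, hXc⟩ := exists_infinite_colourSet_eq_pair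
    (Finset.Icc 1 k).finite_toSet hcol hM (colourSet_eq_singleton hM.nontrivial hMc) huv hdc
  exact ⟨Finset.mem_Icc.2 ⟨one_le_two, hk⟩, X, hX, by rw [hXc, ncard_pair he]⟩
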